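/- Let A ∈ Sp(4, ℤ/Nℤ) have 4 distinct eigenvalues (over an algebraic closure) and suppose (ℤ/Nℤ)^4 = E₁ ⊕ E₂ is a decomposition into two A-invariant orthogonal symplectic planes. If B ∈ Sp(4, ℤ/Nℤ) commutes with A, then B preserves both E₁ and E₂, and the restrictions B₁, B₂ of B to E₁, E₂ (in symplectic bases) lie in SL(2, ℤ/Nℤ). Consequently the map i_N : SL(2,ℤ/Nℤ) × SL(2,ℤ/Nℤ) → Sp(4,ℤ/Nℤ) induced by the decomposition restricts to an isomorphism from C̄₁(N,A) × C̄₂(N,A) onto the centralizer-derived maximal commutative group C(N,A). -/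

import Mathlib

/-!
In the symplectic basis `(e₁, f₁, e₂, f₂)` the matrix of `A` is block diagonal with blocks `A₁`,
`A₂`, and `χ_A = χ_{A₁} χ_{A₂}` is squarefree, so the two factors are coprime and neither block is
scalar. Anything commuting with `A` is then block diagonal as well (the off-diagonal blocks solve a
Sylvester equation with coprime characteristic polynomials), and preserving `ω` forces both blocks
to have determinant one. The centralizer of a non-scalar `2 × 2` matrix consists of polynomials in
it, so it is commutative and equals the maximal commutative `C̄ᵢ`. Finally, the image of
`C̄₁ × C̄₂` under `i_N` is a commutative subgroup of `Sp` containing `C`, hence equal to it.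
-/

/-- The standard symplectic form on `(ℤ/Nℤ)⁴ = (ℤ/Nℤ)² × (ℤ/Nℤ)²`. -/
def omegaV (N : ℕ) (x y : (ZMod N × ZMod N) × (ZMod N × ZMod N)) : ZMod N :=
  x.1.1 * y.2.1 + x.1.2 * y.2.2 - x.2.1 * y.1.1 - x.2.2 * y.1.2

/-- The symplectic group `Sp(4, ℤ/Nℤ)`, realized as the subgroup of linear automorphisms
of `(ℤ/Nℤ)⁴` preserving the standard symplectic form. -/
def Sp (N : ℕ) :
    Subgroup (((ZMod N × ZMod N) × (ZMod N × ZMod N)) ≃ₗ[ZMod N]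
      ((ZMod N × ZMod N) × (ZMod N × ZMod N))) where
  carrier := {B | ∀ x y, omegaV N (B x) (B y) = omegaV N x y}
  one_mem' := by intro x y; rfl
  mul_mem' := by
    intro a b ha hb x y
    have : (a * b) x = a (b x) := rfl
    have : (a * b) y = a (b y) := rfl
    calc omegaV N ((a * b) x) ((a * b) y) = omegaV N (a (b x)) (a (b y)) := rfl
      _ = omegaV N (b x) (b y) := ha _ _
      _ = omegaV N x y := hb _ _
  inv_mem' := by
    intro a ha x y
    have h := ha (a⁻¹ x) (a⁻¹ y)
    have hx : a (a⁻¹ x) = x := a.apply_symm_apply x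
    have hy : a (a⁻¹ y) = y := a.apply_symm_apply y
    calc omegaV N (a⁻¹ x) (a⁻¹ y) = omegaV N (a (a⁻¹ x)) (a (a⁻¹ y)) := (ha _ _).symm
      _ = omegaV N x y := by rw [hx, hy]

open Module Polynomial Submodule Matrix

namespace Matrix

section Sylvester

variable {R : Type*} [CommRing R] {m n : Type*} [Fintype m] [DecidableEq m] [Fintype n]
  [DecidableEq n]

theorem aeval_mul_eq_mul_aeval_of_mul_eq_mul {M₁ : Matrix m m R} {M₂ : Matrix n n R}
    {X : Matrix m n R} (h : M₁ * X = X * M₂) (p : R[X]) :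
    aeval M₁ p * X = X * aeval M₂ p := by
  induction p using Polynomial.induction_on' with
  | add p q hp hq => rw [map_add, map_add, Matrix.add_mul, Matrix.mul_add, hp, hq]
  | monomial k a =>
    have hpow : M₁ ^ k * X = X * M₂ ^ k := by
      induction k with
      | zero => rw [pow_zero, pow_zero, Matrix.one_mul, Matrix.mul_one]
      | succ k ih =>
        rw [pow_succ', pow_succ', Matrix.mul_assoc, ih, ← Matrix.mul_assoc, h, Matrix.mul_assoc]
    rw [aeval_monomial, aeval_monomial, ← Algebra.smul_def, ← Algebra.smul_def,
      Matrix.smul_mul, Matrix.mul_smul, hpow]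

/-- `χ_{M₁}(M₂)` is invertible by coprimality, while `X χ_{M₁}(M₂) = χ_{M₁}(M₁) X = 0`. -/
theorem eq_zero_of_mul_eq_mul_of_isCoprime_charpoly {M₁ : Matrix m m R} {M₂ : Matrix n n R}
    {X : Matrix m n R} (h : M₁ * X = X * M₂) (hcop : IsCoprime M₁.charpoly M₂.charpoly) :
    X = 0 := by
  obtain ⟨u, v, huv⟩ := hcop
  have hunit : aeval M₂ M₁.charpoly * aeval M₂ u = 1 := by
    rw [mul_comm u] at huv
    simpa [aeval_self_charpoly] using congrArg (aeval M₂) huv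
  calc X = X * (aeval M₂ M₁.charpoly * aeval M₂ u) := by rw [hunit, Matrix.mul_one]
    _ = 0 := by
      rw [← Matrix.mul_assoc, ← aeval_mul_eq_mul_aeval_of_mul_eq_mul h, aeval_self_charpoly,
        Matrix.zero_mul, Matrix.zero_mul]

theorem exists_eq_fromBlocks_of_commute {M₁ : Matrix m m R} {M₂ : Matrix n n R}
    (hcop : IsCoprime M₁.charpoly M₂.charpoly) {B : Matrix (m ⊕ n) (m ⊕ n) R}
    (hB : Commute (fromBlocks M₁ 0 0 M₂) B) :
    ∃ B₁ B₂, B = fromBlocks B₁ 0 0 B₂ ∧ Commute M₁ B₁ ∧ Commute M₂ B₂ := by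
  rw [← fromBlocks_toBlocks B, Commute, SemiconjBy] at hB
  simp only [fromBlocks_multiply, Matrix.zero_mul, Matrix.mul_zero, add_zero, zero_add,
    fromBlocks_inj] at hB
  obtain ⟨h₁₁, h₁₂, h₂₁, h₂₂⟩ := hB
  refine ⟨B.toBlocks₁₁, B.toBlocks₂₂, ?_, h₁₁, h₂₂⟩
  rw [← eq_zero_of_mul_eq_mul_of_isCoprime_charpoly h₁₂ hcop,
    ← eq_zero_of_mul_eq_mul_of_isCoprime_charpoly h₂₁ hcop.symm, fromBlocks_toBlocks]

end Sylvester

section FinTwo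

theorem charpoly_scalar_fin_two {R : Type*} [CommRing R] (a : R) :
    (scalar (Fin 2) a).charpoly = (X - C a) ^ 2 := by
  rw [scalar_apply, charpoly_diagonal, Fin.prod_univ_two, sq]

theorem ne_scalar_of_squarefree_charpoly {R : Type*} [CommRing R] [Nontrivial R]
    {M : Matrix (Fin 2) (Fin 2) R} (hM : Squarefree M.charpoly) (a : R) :
    M ≠ scalar (Fin 2) a := by
  rintro rfl
  rw [charpoly_scalar_fin_two, sq] at hM
  exact not_isUnit_X_sub_C a (hM _ dvd_rfl)

variable {K : Type*} [Field K]

theorem exists_eq_smul_one_add_smul_of_commute {A g : Matrix (Fin 2) (Fin 2) K}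
    (hA : ∀ a, A ≠ scalar (Fin 2) a) (hg : Commute A g) : ∃ x y : K, g = x • 1 + y • A := by
  have e := fun i j => congrFun (congrFun hg.eq i) j
  simp only [mul_apply, Fin.sum_univ_two] at e
  have e00 := e 0 0; have e01 := e 0 1; have e10 := e 1 0
  -- `hg` says that `(g 0 1, g 1 0, g 0 0 - g 1 1)` has zero cross product with the nonzero
  -- vector `(A 0 1, A 1 0, A 0 0 - A 1 1)`.
  suffices ∃ y, g 0 1 = y * A 0 1 ∧ g 1 0 = y * A 1 0 ∧ g 0 0 - g 1 1 = y * (A 0 0 - A 1 1) by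
    obtain ⟨y, h01, h10, hd⟩ := this
    refine ⟨g 1 1 - y * A 1 1, y, ?_⟩
    ext i j
    fin_cases i <;> fin_cases j <;> simp [h01, h10]
    linear_combination hd
  by_cases hb : A 0 1 = 0
  · by_cases hc : A 1 0 = 0
    · have had : A 0 0 - A 1 1 ≠ 0 := by
        intro had
        refine hA (A 0 0) ?_
        ext i j
        fin_cases i <;> fin_cases j <;> simp [hb, hc]
        linear_combination -had
      refine ⟨(g 0 0 - g 1 1) / (A 0 0 - A 1 1), ?_, ?_, by field_simp⟩
      · field_simp; linear_combination e01
      · field_simp; linear_combination -e10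
    · refine ⟨g 1 0 / A 1 0, ?_, by field_simp, ?_⟩
      · field_simp; linear_combination -e00
      · field_simp; linear_combination e10
  · refine ⟨g 0 1 / A 0 1, by field_simp, ?_, ?_⟩
    · field_simp; linear_combination e00
    · field_simp; linear_combination -e01

theorem commute_of_commute_of_ne_scalar {A g h : Matrix (Fin 2) (Fin 2) K}
    (hA : ∀ a, A ≠ scalar (Fin 2) a) (hg : Commute A g) (hh : Commute A h) : Commute g h := by
  obtain ⟨x, y, rfl⟩ := exists_eq_smul_one_add_smul_of_commute hA hg
  exact ((Commute.one_left h).smul_left x).add_left (hh.smul_left y)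

theorem transpose_mul_mul_fin_two {R : Type*} [CommRing R] (M : Matrix (Fin 2) (Fin 2) R) :
    Mᵀ * !![0, 1; -1, 0] * M = M.det • !![0, 1; -1, 0] := by
  ext i j
  fin_cases i <;> fin_cases j <;> simp [mul_apply, Fin.sum_univ_two, det_fin_two] <;> ring

end FinTwo

end Matrix

theorem Subgroup.centralizer_eq_of_maximal_commutative {G : Type*} [Group G] {C : Subgroup G}
    {a : G} (haC : a ∈ C) (hC : ∀ x ∈ C, ∀ y ∈ C, x * y = y * x)
    (hCmax : ∀ C' : Subgroup G, (∀ x ∈ C', ∀ y ∈ C', x * y = y * x) → C ≤ C' → C' = C)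
    (hZ : ∀ x ∈ centralizer {a}, ∀ y ∈ centralizer {a}, x * y = y * x) :
    centralizer {a} = C :=
  hCmax _ hZ fun x hx => mem_centralizer_singleton_iff.2 (hC x hx a haC)

theorem Subgroup.eq_map_of_le_map_of_maximal_commutative {G H : Type*} [Group G] [Group H]
    (φ : H →* G) {S C : Subgroup G} {D : Subgroup H} (hD : ∀ x ∈ D, ∀ y ∈ D, x * y = y * x)
    (hDS : D.map φ ≤ S) (hCD : C ≤ D.map φ)
    (hCmax : ∀ C', C' ≤ S → (∀ x ∈ C', ∀ y ∈ C', x * y = y * x) → C ≤ C' → C' = C) :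
    C = D.map φ := by
  refine (hCmax _ hDS ?_ hCD).symm
  rintro _ ⟨x, hx, rfl⟩ _ ⟨y, hy, rfl⟩
  rw [← map_mul, ← map_mul, hD x hx y hy]

namespace Matrix.SpecialLinearGroup

variable {K : Type*} [Field K]

theorem centralizer_fin_two_commutative {A : SpecialLinearGroup (Fin 2) K}
    (hA : ∀ a, (A : Matrix (Fin 2) (Fin 2) K) ≠ scalar _ a) :
    ∀ x ∈ Subgroup.centralizer {A}, ∀ y ∈ Subgroup.centralizer {A}, x * y = y * x := by
  intro x hx y hy
  rw [Subgroup.mem_centralizer_singleton_iff] at hx hy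
  have hxy := commute_of_commute_of_ne_scalar hA ((Commute.symm hx).map coeMonoidHom)
    ((Commute.symm hy).map coeMonoidHom)
  exact coeMonoidHom_injective (by rw [map_mul, map_mul]; exact hxy.eq)

theorem mem_of_commute_of_maximal_commutative {A B : SpecialLinearGroup (Fin 2) K}
    {C : Subgroup (SpecialLinearGroup (Fin 2) K)}
    (hA : Squarefree (A : Matrix (Fin 2) (Fin 2) K).charpoly) (hAC : A ∈ C)
    (hC : ∀ x ∈ C, ∀ y ∈ C, x * y = y * x)
    (hCmax : ∀ C', (∀ x ∈ C', ∀ y ∈ C', x * y = y * x) → C ≤ C' → C' = C)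
    (hB : Commute (A : Matrix (Fin 2) (Fin 2) K) B) : B ∈ C := by
  rw [← Subgroup.centralizer_eq_of_maximal_commutative hAC hC hCmax
    (centralizer_fin_two_commutative (ne_scalar_of_squarefree_charpoly hA)),
    Subgroup.mem_centralizer_singleton_iff]
  exact Subtype.ext hB.eq.symm

end Matrix.SpecialLinearGroup

section PairBasis

variable {K V : Type*} [CommRing K] [AddCommGroup V] [Module K V]

def MapsPairBy (g : V →ₗ[K] V) (e f : V) (M : Matrix (Fin 2) (Fin 2) K) : Prop :=
  g e = M 0 0 • e + M 1 0 • f ∧ g f = M 0 1 • e + M 1 1 • f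

theorem MapsPairBy.mem_span {g : V →ₗ[K] V} {e f : V} {M : Matrix (Fin 2) (Fin 2) K}
    (h : MapsPairBy g e f M) {x : V} (hx : x ∈ span K {e, f}) : g x ∈ span K {e, f} := by
  have hle : span K {e, f} ≤ (span K {e, f}).comap g := span_le.2 <|
    Set.pair_subset (mem_span_pair.2 ⟨_, _, h.1.symm⟩) (mem_span_pair.2 ⟨_, _, h.2.symm⟩)
  exact hle hx

theorem toMatrix_eq_fromBlocks_iff (b : Basis (Fin 2 ⊕ Fin 2) K V) (g : V →ₗ[K] V)
    (M₁ M₂ : Matrix (Fin 2) (Fin 2) K) :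
    LinearMap.toMatrix b b g = fromBlocks M₁ 0 0 M₂ ↔
      MapsPairBy g (b (.inl 0)) (b (.inl 1)) M₁ ∧ MapsPairBy g (b (.inr 0)) (b (.inr 1)) M₂ := by
  rw [← (LinearMap.toMatrix b b).symm.injective.eq_iff, LinearEquiv.symm_apply_apply,
    LinearMap.toMatrix_symm]
  constructor
  · rintro rfl
    simp [MapsPairBy, Matrix.toLin_self, Fintype.sum_sum_type, Fin.sum_univ_two]
  · rintro ⟨⟨h₁, h₂⟩, ⟨h₃, h₄⟩⟩
    refine b.ext fun i => ?_
    rcases i with i | i <;> fin_cases i <;>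
      simp [Matrix.toLin_self, Fintype.sum_sum_type, Fin.sum_univ_two, h₁, h₂, h₃, h₄]

end PairBasis

theorem exists_basis_of_finrank_eq_four {K V : Type*} [Field K] [AddCommGroup V] [Module K V]
    (hV : finrank K V = 4) {e₁ f₁ e₂ f₂ : V}
    (hspan : ∀ v : V, ∃ a b c d : K, v = a • e₁ + b • f₁ + c • e₂ + d • f₂) :
    ∃ b : Basis (Fin 2 ⊕ Fin 2) K V,
      b (.inl 0) = e₁ ∧ b (.inl 1) = f₁ ∧ b (.inr 0) = e₂ ∧ b (.inr 1) = f₂ := by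
  let v : Fin 2 ⊕ Fin 2 → V := Sum.elim ![e₁, f₁] ![e₂, f₂]
  have hle : ⊤ ≤ span K (Set.range v) := by
    rintro x -
    obtain ⟨a, b, c, d, rfl⟩ := hspan x
    have hmem (i) : v i ∈ span K (Set.range v) := subset_span ⟨i, rfl⟩
    exact add_mem (add_mem (add_mem (smul_mem _ a (hmem (.inl 0))) (smul_mem _ b (hmem (.inl 1))))
      (smul_mem _ c (hmem (.inr 0)))) (smul_mem _ d (hmem (.inr 1)))
  exact ⟨basisOfTopLeSpanOfCardEqFinrank v hle (by simp [hV]), by simp [v]⟩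

section BlockEmbedding

variable {K V : Type*} [CommRing K] [AddCommGroup V] [Module K V] (b : Basis (Fin 2 ⊕ Fin 2) K V)

theorem toMatrix_linearEquiv_injective :
    Function.Injective fun g : V ≃ₗ[K] V => LinearMap.toMatrix b b g :=
  fun _ _ h => LinearEquiv.toLinearMap_injective ((LinearMap.toMatrix b b).injective h)

variable {b} {f : SpecialLinearGroup (Fin 2) K × SpecialLinearGroup (Fin 2) K → V ≃ₗ[K] V}

theorem injective_of_toMatrix_eq_fromBlocks
    (hf : ∀ x, LinearMap.toMatrix b b (f x) = fromBlocks x.1 0 0 x.2) : Function.Injective f :=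
  fun x y hxy => by
    have := congrArg (fun g : V ≃ₗ[K] V => LinearMap.toMatrix b b g) hxy
    simp only [hf, fromBlocks_inj] at this
    exact Prod.ext (Subtype.ext this.1) (Subtype.ext this.2.2.2)

theorem map_mul_of_toMatrix_eq_fromBlocks
    (hf : ∀ x, LinearMap.toMatrix b b (f x) = fromBlocks x.1 0 0 x.2) (x y) :
    f (x * y) = f x * f y :=
  toMatrix_linearEquiv_injective b (by simp [LinearMap.toMatrix_mul, hf, fromBlocks_multiply])

end BlockEmbedding

section Symplectic

variable {K V : Type*} [CommRing K] [AddCommGroup V] [Module K V]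

theorem toMatrix₂_eq_fromBlocks {ω : LinearMap.BilinForm K V} (hω : ω.IsAlt)
    (b : Basis (Fin 2 ⊕ Fin 2) K V)
    (h₁ : ω (b (.inl 0)) (b (.inl 1)) = 1) (h₂ : ω (b (.inr 0)) (b (.inr 1)) = 1)
    (h₁₂ : ∀ i j, ω (b (.inl i)) (b (.inr j)) = 0) :
    LinearMap.toMatrix₂ b b ω = fromBlocks !![0, 1; -1, 0] 0 0 !![0, 1; -1, 0] := by
  have h₁' : ω (b (.inl 1)) (b (.inl 0)) = -1 := by rw [← hω.neg_eq, h₁]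
  have h₂' : ω (b (.inr 1)) (b (.inr 0)) = -1 := by rw [← hω.neg_eq, h₂]
  have h₂₁ (i j : Fin 2) : ω (b (.inr j)) (b (.inl i)) = 0 := by rw [← hω.neg_eq, h₁₂, neg_zero]
  ext (i | i) (j | j) <;> fin_cases i <;> fin_cases j <;>
    simp [LinearMap.toMatrix₂_apply, hω.self_eq_zero, h₁, h₂, h₁', h₂', h₁₂, h₂₁]

variable {ω : LinearMap.BilinForm K V} {b : Basis (Fin 2 ⊕ Fin 2) K V}

theorem compl₁₂_self_eq_iff_det_eq_one [Nontrivial K]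
    (hω : LinearMap.toMatrix₂ b b ω = fromBlocks !![0, 1; -1, 0] 0 0 !![0, 1; -1, 0])
    {g : V →ₗ[K] V} {M₁ M₂ : Matrix (Fin 2) (Fin 2) K}
    (hg : LinearMap.toMatrix b b g = fromBlocks M₁ 0 0 M₂) :
    ω.compl₁₂ g g = ω ↔ M₁.det = 1 ∧ M₂.det = 1 := by
  rw [← (LinearMap.toMatrix₂ b b).injective.eq_iff, LinearMap.toMatrix₂_compl₁₂ b b, hω, hg,
    fromBlocks_transpose, fromBlocks_multiply, fromBlocks_multiply]
  simp [transpose_mul_mul_fin_two, fromBlocks_inj]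

theorem exists_toMatrix_eq_fromBlocks_of_commute [Nontrivial K]
    (hω : LinearMap.toMatrix₂ b b ω = fromBlocks !![0, 1; -1, 0] 0 0 !![0, 1; -1, 0])
    {a : V →ₗ[K] V} {A₁ A₂ : Matrix (Fin 2) (Fin 2) K}
    (ha : LinearMap.toMatrix b b a = fromBlocks A₁ 0 0 A₂)
    (hcop : IsCoprime A₁.charpoly A₂.charpoly) {g : V →ₗ[K] V} (hga : Commute a g)
    (hgω : ω.compl₁₂ g g = ω) :
    ∃ B₁ B₂ : SpecialLinearGroup (Fin 2) K, Commute A₁ B₁ ∧ Commute A₂ B₂ ∧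
      LinearMap.toMatrix b b g = fromBlocks B₁ 0 0 B₂ := by
  have hcomm : Commute (fromBlocks A₁ 0 0 A₂) (LinearMap.toMatrix b b g) := by
    rw [← ha]
    exact hga.map (LinearMap.toMatrixAlgEquiv b)
  obtain ⟨B₁, B₂, hg, h₁, h₂⟩ := exists_eq_fromBlocks_of_commute hcop hcomm
  obtain ⟨hdet₁, hdet₂⟩ := (compl₁₂_self_eq_iff_det_eq_one hω hg).1 hgω
  exact ⟨⟨B₁, hdet₁⟩, ⟨B₂, hdet₂⟩, h₁, h₂, hg⟩

end Symplectic

def omegaForm (N : ℕ) :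
    LinearMap.BilinForm (ZMod N) ((ZMod N × ZMod N) × (ZMod N × ZMod N)) :=
  LinearMap.mk₂ (ZMod N) (omegaV N)
    (fun _ _ _ => by simp only [omegaV, Prod.fst_add, Prod.snd_add]; ring)
    (fun _ _ _ => by simp only [omegaV, Prod.smul_fst, Prod.smul_snd, smul_eq_mul]; ring)
    (fun _ _ _ => by simp only [omegaV, Prod.fst_add, Prod.snd_add]; ring)
    (fun _ _ _ => by simp only [omegaV, Prod.smul_fst, Prod.smul_snd, smul_eq_mul]; ring)

theorem omegaForm_isAlt (N : ℕ) : (omegaForm N).IsAlt := fun x => by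
  change omegaV N x x = 0
  rw [omegaV]
  ring

theorem mem_Sp_iff {N : ℕ} {B : ((ZMod N × ZMod N) × (ZMod N × ZMod N)) ≃ₗ[ZMod N]
      ((ZMod N × ZMod N) × (ZMod N × ZMod N))} :
    B ∈ Sp N ↔ (omegaForm N).compl₁₂ (B : _ →ₗ[ZMod N] _) B = omegaForm N := by
  rw [LinearMap.ext_iff₂]
  rfl

theorem centralizer_decomposition_general
    (N : ℕ) (hN : N.Prime)
    (A : ((ZMod N × ZMod N) × (ZMod N × ZMod N)) ≃ₗ[ZMod N]
      ((ZMod N × ZMod N) × (ZMod N × ZMod N)))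
    (hchar : Squarefree (LinearMap.charpoly (A : ((ZMod N × ZMod N) × (ZMod N × ZMod N))
      →ₗ[ZMod N] ((ZMod N × ZMod N) × (ZMod N × ZMod N)))))
    (e₁ f₁ e₂ f₂ : (ZMod N × ZMod N) × (ZMod N × ZMod N))
    (h11 : omegaV N e₁ f₁ = 1) (h22 : omegaV N e₂ f₂ = 1)
    (hee : omegaV N e₁ e₂ = 0) (hef : omegaV N e₁ f₂ = 0)
    (hfe : omegaV N f₁ e₂ = 0) (hff : omegaV N f₁ f₂ = 0)
    (hspan : ∀ v : (ZMod N × ZMod N) × (ZMod N × ZMod N),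
      ∃ a b c d : ZMod N, v = a • e₁ + b • f₁ + c • e₂ + d • f₂)
    (A₁ A₂ : Matrix.SpecialLinearGroup (Fin 2) (ZMod N))
    (hA₁ : A e₁ = A₁.1 0 0 • e₁ + A₁.1 1 0 • f₁ ∧ A f₁ = A₁.1 0 1 • e₁ + A₁.1 1 1 • f₁)
    (hA₂ : A e₂ = A₂.1 0 0 • e₂ + A₂.1 1 0 • f₂ ∧ A f₂ = A₂.1 0 1 • e₂ + A₂.1 1 1 • f₂)
    (C : Subgroup (((ZMod N × ZMod N) × (ZMod N × ZMod N)) ≃ₗ[ZMod N]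
      ((ZMod N × ZMod N) × (ZMod N × ZMod N))))
    (hCsp : C ≤ Sp N) (hAC : A ∈ C)
    (hCcomm : ∀ x ∈ C, ∀ y ∈ C, x * y = y * x)
    (hCmax : ∀ C', C' ≤ Sp N → (∀ x ∈ C', ∀ y ∈ C', x * y = y * x) → C ≤ C' → C' = C)
    (C₁ C₂ : Subgroup (Matrix.SpecialLinearGroup (Fin 2) (ZMod N)))
    (hA₁C : A₁ ∈ C₁) (hA₂C : A₂ ∈ C₂)
    (hC₁comm : ∀ x ∈ C₁, ∀ y ∈ C₁, x * y = y * x)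
    (hC₂comm : ∀ x ∈ C₂, ∀ y ∈ C₂, x * y = y * x)
    (hC₁max : ∀ C', (∀ x ∈ C', ∀ y ∈ C', x * y = y * x) → C₁ ≤ C' → C' = C₁)
    (hC₂max : ∀ C', (∀ x ∈ C', ∀ y ∈ C', x * y = y * x) → C₂ ≤ C' → C' = C₂)
    (iN : Matrix.SpecialLinearGroup (Fin 2) (ZMod N) ×
        Matrix.SpecialLinearGroup (Fin 2) (ZMod N) →
      (((ZMod N × ZMod N) × (ZMod N × ZMod N)) ≃ₗ[ZMod N]
        ((ZMod N × ZMod N) × (ZMod N × ZMod N))))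
    (hiN : ∀ B₁ B₂,
      iN (B₁, B₂) e₁ = B₁.1 0 0 • e₁ + B₁.1 1 0 • f₁ ∧
      iN (B₁, B₂) f₁ = B₁.1 0 1 • e₁ + B₁.1 1 1 • f₁ ∧
      iN (B₁, B₂) e₂ = B₂.1 0 0 • e₂ + B₂.1 1 0 • f₂ ∧
      iN (B₁, B₂) f₂ = B₂.1 0 1 • e₂ + B₂.1 1 1 • f₂) :
    (∀ B, B ∈ Sp N → B * A = A * B →
      ((∀ x ∈ Submodule.span (ZMod N) {e₁, f₁}, B x ∈ Submodule.span (ZMod N) {e₁, f₁}) ∧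
       (∀ x ∈ Submodule.span (ZMod N) {e₂, f₂}, B x ∈ Submodule.span (ZMod N) {e₂, f₂}) ∧
       ∃ B₁ B₂ : Matrix (Fin 2) (Fin 2) (ZMod N), B₁.det = 1 ∧ B₂.det = 1 ∧
         B e₁ = B₁ 0 0 • e₁ + B₁ 1 0 • f₁ ∧ B f₁ = B₁ 0 1 • e₁ + B₁ 1 1 • f₁ ∧
         B e₂ = B₂ 0 0 • e₂ + B₂ 1 0 • f₂ ∧ B f₂ = B₂ 0 1 • e₂ + B₂ 1 1 • f₂)) ∧
    Function.Injective iN ∧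
    (∀ B, B ∈ C ↔ ∃ B₁ ∈ C₁, ∃ B₂ ∈ C₂, B = iN (B₁, B₂)) := by
  have := Fact.mk hN
  obtain ⟨b, rfl, rfl, rfl, rfl⟩ := exists_basis_of_finrank_eq_four (by simp) hspan
  have hAmat : LinearMap.toMatrix b b A = fromBlocks A₁ 0 0 A₂ :=
    (toMatrix_eq_fromBlocks_iff b _ _ _).2 ⟨hA₁, hA₂⟩
  have hiNmat (x) : LinearMap.toMatrix b b (iN x) = fromBlocks x.1 0 0 x.2 :=
    (toMatrix_eq_fromBlocks_iff b _ _ _).2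
      ⟨⟨(hiN x.1 x.2).1, (hiN x.1 x.2).2.1⟩, ⟨(hiN x.1 x.2).2.2.1, (hiN x.1 x.2).2.2.2⟩⟩
  have hωmat := toMatrix₂_eq_fromBlocks (omegaForm_isAlt N) b h11 h22
    (by simp only [Fin.forall_fin_two]; exact ⟨⟨hee, hef⟩, hfe, hff⟩)
  rw [← LinearMap.charpoly_toMatrix _ b, hAmat, charpoly_fromBlocks_zero₁₂] at hchar
  obtain ⟨hcop, hsq₁, hsq₂⟩ := squarefree_mul_iff.1 hchar
  have key (B) (hB : B ∈ Sp N) (hBA : B * A = A * B) :=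
    exists_toMatrix_eq_fromBlocks_of_commute hωmat hAmat (isRelPrime_iff_isCoprime.1 hcop)
      (congrArg LinearEquiv.toLinearMap hBA.symm) (mem_Sp_iff.1 hB)
  refine ⟨fun B hB hBA => ?_, injective_of_toMatrix_eq_fromBlocks hiNmat, fun B => ?_⟩
  · obtain ⟨B₁, B₂, -, -, hBmat⟩ := key B hB hBA
    obtain ⟨h₁, h₂⟩ := (toMatrix_eq_fromBlocks_iff b _ _ _).1 hBmat
    exact ⟨fun _ => h₁.mem_span, fun _ => h₂.mem_span, B₁, B₂, B₁.2, B₂.2, h₁.1, h₁.2, h₂.1, h₂.2⟩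
  let ι := MonoidHom.mk' iN (map_mul_of_toMatrix_eq_fromBlocks hiNmat)
  rw [Subgroup.eq_map_of_le_map_of_maximal_commutative ι (D := C₁.prod C₂)
    (fun x hx y hy => Prod.ext (hC₁comm _ hx.1 _ hy.1) (hC₂comm _ hx.2 _ hy.2)) ?_ ?_ hCmax]
  · simp [ι, Subgroup.mem_prod, and_assoc, eq_comm]
  · rintro _ ⟨x, -, rfl⟩
    exact mem_Sp_iff.2 ((compl₁₂_self_eq_iff_det_eq_one hωmat (hiNmat x)).2 ⟨x.1.2, x.2.2⟩)
  · intro B hB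
    obtain ⟨B₁, B₂, h₁, h₂, hBmat⟩ := key B (hCsp hB) (hCcomm B hB A hAC)
    refine ⟨(B₁, B₂), ⟨?_, ?_⟩, toMatrix_linearEquiv_injective b ((hiNmat _).trans hBmat.symm)⟩
    exacts [SpecialLinearGroup.mem_of_commute_of_maximal_commutative hsq₁ hA₁C hC₁comm hC₁max h₁,
      SpecialLinearGroup.mem_of_commute_of_maximal_commutative hsq₂ hA₂C hC₂comm hC₂max h₂]

/-- for `A ∈ Sp(4,ℤ/Nℤ)` with `4` distinct eigenvalues (squarefree
characteristic polynomial) and an `A`-invariant orthogonal symplectic decomposition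
`(ℤ/Nℤ)⁴ = E₁ ⊕ E₂`: every `B ∈ Sp(4,ℤ/Nℤ)` commuting with `A` preserves `E₁` and `E₂`
and restricts to elements of `SL(2,ℤ/Nℤ)`; moreover the induced map
`i_N : SL₂ × SL₂ → Sp₄` restricts to an isomorphism from `C̄₁(N,A) × C̄₂(N,A)` onto the
maximal commutative subgroup `C(N,A)`. -/
theorem centralizer_decomposition
    (N : ℕ) [NeZero N] (hN : N.Prime)
    (A : ((ZMod N × ZMod N) × (ZMod N × ZMod N)) ≃ₗ[ZMod N]
      ((ZMod N × ZMod N) × (ZMod N × ZMod N)))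
    (hAsp : A ∈ Sp N)
    (hchar : Squarefree (LinearMap.charpoly (A : ((ZMod N × ZMod N) × (ZMod N × ZMod N))
      →ₗ[ZMod N] ((ZMod N × ZMod N) × (ZMod N × ZMod N)))))
    (e₁ f₁ e₂ f₂ : (ZMod N × ZMod N) × (ZMod N × ZMod N))
    (h11 : omegaV N e₁ f₁ = 1) (h22 : omegaV N e₂ f₂ = 1)
    (hee : omegaV N e₁ e₂ = 0) (hef : omegaV N e₁ f₂ = 0)
    (hfe : omegaV N f₁ e₂ = 0) (hff : omegaV N f₁ f₂ = 0)
    (hspan : ∀ v : (ZMod N × ZMod N) × (ZMod N × ZMod N),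
      ∃ a b c d : ZMod N, v = a • e₁ + b • f₁ + c • e₂ + d • f₂)
    (hAE₁ : ∀ x ∈ Submodule.span (ZMod N) {e₁, f₁}, A x ∈ Submodule.span (ZMod N) {e₁, f₁})
    (hAE₂ : ∀ x ∈ Submodule.span (ZMod N) {e₂, f₂}, A x ∈ Submodule.span (ZMod N) {e₂, f₂})
    (A₁ A₂ : Matrix.SpecialLinearGroup (Fin 2) (ZMod N))
    (hA₁ : A e₁ = A₁.1 0 0 • e₁ + A₁.1 1 0 • f₁ ∧ A f₁ = A₁.1 0 1 • e₁ + A₁.1 1 1 • f₁)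
    (hA₂ : A e₂ = A₂.1 0 0 • e₂ + A₂.1 1 0 • f₂ ∧ A f₂ = A₂.1 0 1 • e₂ + A₂.1 1 1 • f₂)
    (C : Subgroup (((ZMod N × ZMod N) × (ZMod N × ZMod N)) ≃ₗ[ZMod N]
      ((ZMod N × ZMod N) × (ZMod N × ZMod N))))
    (hCsp : C ≤ Sp N) (hAC : A ∈ C)
    (hCcomm : ∀ x ∈ C, ∀ y ∈ C, x * y = y * x)
    (hCmax : ∀ C', C' ≤ Sp N → (∀ x ∈ C', ∀ y ∈ C', x * y = y * x) → C ≤ C' → C' = C)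
    (C₁ C₂ : Subgroup (Matrix.SpecialLinearGroup (Fin 2) (ZMod N)))
    (hA₁C : A₁ ∈ C₁) (hA₂C : A₂ ∈ C₂)
    (hC₁comm : ∀ x ∈ C₁, ∀ y ∈ C₁, x * y = y * x)
    (hC₂comm : ∀ x ∈ C₂, ∀ y ∈ C₂, x * y = y * x)
    (hC₁max : ∀ C', (∀ x ∈ C', ∀ y ∈ C', x * y = y * x) → C₁ ≤ C' → C' = C₁)
    (hC₂max : ∀ C', (∀ x ∈ C', ∀ y ∈ C', x * y = y * x) → C₂ ≤ C' → C' = C₂)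
    (iN : Matrix.SpecialLinearGroup (Fin 2) (ZMod N) ×
        Matrix.SpecialLinearGroup (Fin 2) (ZMod N) →
      (((ZMod N × ZMod N) × (ZMod N × ZMod N)) ≃ₗ[ZMod N]
        ((ZMod N × ZMod N) × (ZMod N × ZMod N))))
    (hiN : ∀ B₁ B₂,
      iN (B₁, B₂) e₁ = B₁.1 0 0 • e₁ + B₁.1 1 0 • f₁ ∧
      iN (B₁, B₂) f₁ = B₁.1 0 1 • e₁ + B₁.1 1 1 • f₁ ∧
      iN (B₁, B₂) e₂ = B₂.1 0 0 • e₂ + B₂.1 1 0 • f₂ ∧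
      iN (B₁, B₂) f₂ = B₂.1 0 1 • e₂ + B₂.1 1 1 • f₂) :
    (∀ B, B ∈ Sp N → B * A = A * B →
      ((∀ x ∈ Submodule.span (ZMod N) {e₁, f₁}, B x ∈ Submodule.span (ZMod N) {e₁, f₁}) ∧
       (∀ x ∈ Submodule.span (ZMod N) {e₂, f₂}, B x ∈ Submodule.span (ZMod N) {e₂, f₂}) ∧
       ∃ B₁ B₂ : Matrix (Fin 2) (Fin 2) (ZMod N), B₁.det = 1 ∧ B₂.det = 1 ∧
         B e₁ = B₁ 0 0 • e₁ + B₁ 1 0 • f₁ ∧ B f₁ = B₁ 0 1 • e₁ + B₁ 1 1 • f₁ ∧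
         B e₂ = B₂ 0 0 • e₂ + B₂ 1 0 • f₂ ∧ B f₂ = B₂ 0 1 • e₂ + B₂ 1 1 • f₂)) ∧
    Function.Injective iN ∧
    (∀ B, B ∈ C ↔ ∃ B₁ ∈ C₁, ∃ B₂ ∈ C₂, B = iN (B₁, B₂)) :=
  centralizer_decomposition_general N hN A hchar e₁ f₁ e₂ f₂ h11 h22 hee hef hfe hff hspan A₁ A₂ hA₁
    hA₂ C hCsp hAC hCcomm hCmax C₁ C₂ hA₁C hA₂C hC₁comm hC₂comm hC₁max hC₂max iN hiN
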